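/- Let A be a real d×n matrix, b ∈ ℝ^d, P a real m×n matrix, f : ℝ → ℝ convex and three times differentiable, ε > 0, R > 0, w ∈ ℝ^m, with resistances r_i = R^{−2}(f''(w_i) + ε·Φ(w)/m). Suppose there exists x* with A x* = b and ‖P x*‖_∞ ≤ R, and let Δ̃ attain the minimum of ∑_{i=1}^m r_i (PΔ)_i² over {Δ : AΔ = b}. Then ∑_{i=1}^m f''(w_i)·|(PΔ̃)_i| ≤ (1+ε)·R·Φ(w). -/

import Mathlib

/-!
Write `c i = f''(w i) ≥ 0`, `Φ = ∑ c i`, `v = PΔ̃` and `u = Px*`. Weighted Cauchy–Schwarz gives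
`(∑ c i |v i|)² ≤ Φ · ∑ c i (v i)²`. Since `c i ≤ R² r i`, minimality of `Δ̃` and `|u i| ≤ R`,
`∑ c i (v i)² ≤ R² ∑ r i (v i)² ≤ R² ∑ r i (u i)² ≤ R⁴ ∑ r i = (1 + ε) R² Φ`.
Hence `(∑ c i |v i|)² ≤ (1 + ε) R² Φ² ≤ ((1 + ε) R Φ)²`.
-/

open Finset

theorem ConvexOn.deriv_deriv_nonneg {f : ℝ → ℝ} (hconv : ConvexOn ℝ Set.univ f)
    (hf : Differentiable ℝ f) (x : ℝ) : 0 ≤ deriv (deriv f) x :=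
  Monotone.deriv_nonneg <| monotoneOn_univ.mp <| hconv.monotoneOn_deriv fun y _ => hf y

section Resistances

variable {ι : Type*} [Fintype ι]

theorem sq_sum_mul_abs_le {c : ι → ℝ} (hc : 0 ≤ c) (v : ι → ℝ) :
    (∑ i, c i * |v i|) ^ 2 ≤ (∑ i, c i) * ∑ i, c i * v i ^ 2 :=
  sum_sq_le_sum_mul_sum_of_sq_le_mul _ (fun i _ => hc i)
    (fun i _ => mul_nonneg (hc i) (sq_nonneg _))
    (fun i _ => by rw [mul_pow, sq_abs]; nlinarith)

theorem sum_mul_sq_le_sq_norm_mul_sum {r : ι → ℝ} (hr : 0 ≤ r) (u : ι → ℝ) :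
    ∑ i, r i * u i ^ 2 ≤ ‖u‖ ^ 2 * ∑ i, r i := by
  rw [mul_sum]
  refine sum_le_sum fun i _ => ?_
  have hui : u i ^ 2 ≤ ‖u‖ ^ 2 := by
    simpa only [Real.norm_eq_abs, sq_abs] using
      pow_le_pow_left₀ (norm_nonneg _) (norm_le_pi_norm u i) 2
  rw [mul_comm (‖u‖ ^ 2)]
  exact mul_le_mul_of_nonneg_left hui (hr i)

theorem sum_add_mul_sum_div_card (c : ι → ℝ) (ε : ℝ) :
    ∑ i, (c i + ε * (∑ j, c j) / Fintype.card ι) = (1 + ε) * ∑ i, c i := by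
  rw [sum_add_distrib, sum_const, card_univ, nsmul_eq_mul]
  rcases isEmpty_or_nonempty ι with _ | _
  · simp
  · field_simp

theorem sq_sum_mul_abs_le_of_energy_le {c r u v : ι → ℝ} {ε R : ℝ} (hc : 0 ≤ c) (hε : 0 ≤ ε)
    (hR : R ≠ 0)
    (hr : ∀ i, r i = 1 / R ^ 2 * (c i + ε * (∑ j, c j) / Fintype.card ι))
    (hu : ‖u‖ ≤ R) (henergy : ∑ i, r i * v i ^ 2 ≤ ∑ i, r i * u i ^ 2) :
    (∑ i, c i * |v i|) ^ 2 ≤ (1 + ε) * R ^ 2 * (∑ i, c i) ^ 2 := by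
  have hΦ : 0 ≤ ∑ i, c i := sum_nonneg fun i _ => hc i
  have hmean : 0 ≤ ε * (∑ j, c j) / Fintype.card ι := by positivity
  have hRr : ∀ i, R ^ 2 * r i = c i + ε * (∑ j, c j) / Fintype.card ι := fun i => by
    rw [hr i]
    field_simp
  have hr0 : 0 ≤ r := fun i => by
    rw [hr i]
    exact mul_nonneg (by positivity) (add_nonneg (hc i) hmean)
  have hc_le : ∑ i, c i * v i ^ 2 ≤ R ^ 2 * ∑ i, r i * v i ^ 2 := by
    rw [mul_sum]
    refine sum_le_sum fun i _ => ?_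
    nlinarith [hRr i, hc i, sq_nonneg (v i)]
  have hsum_r : R ^ 2 * ∑ i, r i = (1 + ε) * ∑ i, c i := by
    rw [mul_sum, ← sum_add_mul_sum_div_card c ε]
    exact sum_congr rfl fun i _ => hRr i
  have hu2 : ‖u‖ ^ 2 ≤ R ^ 2 := pow_le_pow_left₀ (norm_nonneg u) hu 2
  calc (∑ i, c i * |v i|) ^ 2 ≤ (∑ i, c i) * ∑ i, c i * v i ^ 2 := sq_sum_mul_abs_le hc v
    _ ≤ (∑ i, c i) * (R ^ 2 * ∑ i, r i * u i ^ 2) := by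
      gcongr
      exact hc_le.trans (by gcongr)
    _ ≤ (∑ i, c i) * (R ^ 2 * (R ^ 2 * ∑ i, r i)) := by
      have hr_sum : 0 ≤ ∑ i, r i := sum_nonneg fun i _ => hr0 i
      gcongr
      exact (sum_mul_sq_le_sq_norm_mul_sum hr0 u).trans (by gcongr)
    _ = (1 + ε) * R ^ 2 * (∑ i, c i) ^ 2 := by
      rw [hsum_r]
      ring

end Resistances

theorem bound_linear_general
    (d n m : ℕ) (A : Matrix (Fin d) (Fin n) ℝ) (b : Fin d → ℝ)
    (P : Matrix (Fin m) (Fin n) ℝ) (f : ℝ → ℝ)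
    (hconv : ConvexOn ℝ Set.univ f)
    (hf1 : Differentiable ℝ f)
    (ε R : ℝ) (hε : 0 < ε) (hR : 0 < R)
    (w r : Fin m → ℝ)
    (hr : ∀ i, r i = 1 / R ^ 2 *
      (deriv (deriv f) (w i) + ε * (∑ j, deriv (deriv f) (w j)) / m))
    (xstar : Fin n → ℝ) (hxA : A.mulVec xstar = b)
    (hxR : ‖P.mulVec xstar‖ ≤ R)
    (Δt : Fin n → ℝ)
    (hΔmin : ∀ Δ : Fin n → ℝ, A.mulVec Δ = b →
      (∑ i, r i * (P.mulVec Δt) i ^ 2) ≤ ∑ i, r i * (P.mulVec Δ) i ^ 2) :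
    (∑ i, deriv (deriv f) (w i) * |(P.mulVec Δt) i|) ≤
      (1 + ε) * R * ∑ i, deriv (deriv f) (w i) := by
  have hc : 0 ≤ fun i => deriv (deriv f) (w i) := fun i => hconv.deriv_deriv_nonneg hf1 (w i)
  have hΦ : 0 ≤ ∑ i, deriv (deriv f) (w i) := sum_nonneg fun i _ => hc i
  have hsq := sq_sum_mul_abs_le_of_energy_le hc hε.le hR.ne'
    (fun i => by rw [hr i, Fintype.card_fin]) hxR (hΔmin xstar hxA)
  refine le_of_sq_le_sq (hsq.trans ?_) (by positivity)
  nlinarith [mul_nonneg (mul_nonneg hε.le (sq_nonneg R)) (sq_nonneg (∑ i, deriv (deriv f) (w i)))]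

/-- Lemma B.1 ('BoundLinear'): ∑ᵢ f''(wᵢ)·|(PΔ̃)ᵢ| ≤ (1+ε)·R·Φ(w). -/
theorem bound_linear
    (d n m : ℕ) (A : Matrix (Fin d) (Fin n) ℝ) (b : Fin d → ℝ)
    (P : Matrix (Fin m) (Fin n) ℝ) (f : ℝ → ℝ)
    (hconv : ConvexOn ℝ Set.univ f)
    (hf1 : Differentiable ℝ f) (hf2 : Differentiable ℝ (deriv f))
    (hf3 : Differentiable ℝ (deriv (deriv f)))
    (ε R : ℝ) (hε : 0 < ε) (hR : 0 < R)
    (w r : Fin m → ℝ)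
    (hr : ∀ i, r i = 1 / R ^ 2 *
      (deriv (deriv f) (w i) + ε * (∑ j, deriv (deriv f) (w j)) / m))
    (xstar : Fin n → ℝ) (hxA : A.mulVec xstar = b)
    (hxR : ‖P.mulVec xstar‖ ≤ R)
    (Δt : Fin n → ℝ) (hΔA : A.mulVec Δt = b)
    (hΔmin : ∀ Δ : Fin n → ℝ, A.mulVec Δ = b →
      (∑ i, r i * (P.mulVec Δt) i ^ 2) ≤ ∑ i, r i * (P.mulVec Δ) i ^ 2) :
    (∑ i, deriv (deriv f) (w i) * |(P.mulVec Δt) i|) ≤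
      (1 + ε) * R * ∑ i, deriv (deriv f) (w i) :=
  bound_linear_general d n m A b P f hconv hf1 ε R hε hR w r hr xstar hxA hxR Δt hΔmin
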